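/- arXiv:1208.1915 — 4 statements merged into one kernel-verified Lean document; each statement's English description precedes it below -/
import Mathlib

section
/- Let n ≥ 1 and let x = x_1 x_2 … x_{n+1} be a 210-avoiding primitive ascent sequence of length n+1, and set a_i = i + x_{i+1} − asc(x_1 x_2 … x_{i+1}) for 1 ≤ i ≤ n. Then 1 ≤ a_i ≤ i for all 1 ≤ i ≤ n, and there are no indices 1 ≤ i < j < k ≤ n with a_i ≥ a_j ≥ a_k; that is, (a_1, …, a_n) ∈ N(Δ_n). -/
/-- `asc x m` is the number of ascents in the sequence `x 1, x 2, …, x m`. -/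
def asc (x : ℕ → ℕ) (m : ℕ) : ℕ :=
  ((Finset.Ico 1 m).filter (fun i => x i < x (i + 1))).card

/-- `x 1, …, x m` is an ascent sequence. -/
def AscentSeq (x : ℕ → ℕ) (m : ℕ) : Prop :=
  x 1 = 0 ∧ ∀ i, 2 ≤ i → i ≤ m → x i ≤ asc x (i - 1) + 1

/-- `x 1, …, x m` avoids the pattern 210. -/
def Avoids210 (x : ℕ → ℕ) (m : ℕ) : Prop :=
  ¬ ∃ i j k, 1 ≤ i ∧ i < j ∧ j < k ∧ k ≤ m ∧ x j < x i ∧ x k < x j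

/-- `x 1, …, x m` is primitive: no two consecutive equal entries. -/
def Primitive (x : ℕ → ℕ) (m : ℕ) : Prop :=
  ∀ i, 1 ≤ i → i < m → x i ≠ x (i + 1)

/-- `(a 1, …, a n) ∈ N(Δ_n)`: a 01-filling of the staircase `Δ_n` where row `i`
has its unique 1 in column `a i` (so `1 ≤ a i ≤ i`), with no NE-chain of length 3
(no `i < j < k` with `a i ≥ a j ≥ a k`). -/
def NDelta (a : ℕ → ℕ) (n : ℕ) : Prop :=
  (∀ i, 1 ≤ i → i ≤ n → 1 ≤ a i ∧ a i ≤ i) ∧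
  ¬ ∃ i j k, 1 ≤ i ∧ i < j ∧ j < k ∧ k ≤ n ∧ a j ≤ a i ∧ a k ≤ a j


/-!
Write `a i = x (i + 1) + d i`, where `d i = i - asc x (i + 1)` counts the non-ascents among the
first `i` steps of `x`. Then `d` is weakly increasing and is constant on `[i, j]` only if `x`
strictly increases from position `i + 1` to `j + 1`. Hence `a j ≤ a i` with `i < j` forces
`x (j + 1) < x (i + 1)`, so a chain `a i ≥ a j ≥ a k` would give a 210 pattern in `x`.
The bound `a i ≤ i` is `x i ≤ asc x i`, which holds for every ascent sequence, and `1 ≤ a i`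
holds because `d i = 0` makes `x` strictly increasing up to position `i + 1`.
-/

lemma asc_one (x : ℕ → ℕ) : asc x 1 = 0 := by
  simp [asc]

lemma asc_succ (x : ℕ → ℕ) {m : ℕ} (hm : 1 ≤ m) :
    asc x (m + 1) = asc x m + if x m < x (m + 1) then 1 else 0 := by
  unfold asc
  rw [Nat.Ico_succ_right_eq_insert_Ico hm, Finset.filter_insert]
  split
  · rw [Finset.card_insert_of_notMem (by simp)]
  · simp

lemma asc_add_le (x : ℕ → ℕ) {m : ℕ} (hm : 1 ≤ m) (k : ℕ) : asc x (m + k) ≤ asc x m + k := by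
  induction k with
  | zero => rfl
  | succ k ih =>
    rw [← add_assoc, asc_succ x (by omega)]
    split <;> omega

lemma asc_succ_le (x : ℕ → ℕ) (i : ℕ) : asc x (i + 1) ≤ i := by
  simpa [asc_one, add_comm] using asc_add_le x le_rfl i

lemma add_le_of_asc_add_eq (x : ℕ → ℕ) {m : ℕ} (hm : 1 ≤ m) {k : ℕ}
    (h : asc x (m + k) = asc x m + k) : x m + k ≤ x (m + k) := by
  induction k with
  | zero => rfl
  | succ k ih =>
    simp only [← add_assoc] at h ⊢
    rw [asc_succ x (by omega)] at h
    have hk := asc_add_le x hm k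
    split at h
    · have := ih (by omega)
      omega
    · omega

lemma AscentSeq.le_asc {x : ℕ → ℕ} {m : ℕ} (hx : AscentSeq x m) {i : ℕ} (hi : 1 ≤ i)
    (him : i ≤ m) : x i ≤ asc x i := by
  induction i, hi using Nat.le_induction with
  | base => rw [hx.1, asc_one]
  | succ i hi ih =>
    have hstep := hx.2 (i + 1) (by omega) him
    have := ih (by omega)
    rw [Nat.add_sub_cancel] at hstep
    rw [asc_succ x hi]
    split <;> omega

def toFilling (x : ℕ → ℕ) (i : ℕ) : ℕ :=
  i + x (i + 1) - asc x (i + 1)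

lemma one_le_toFilling (x : ℕ → ℕ) {i : ℕ} (hi : 1 ≤ i) : 1 ≤ toFilling x i := by
  unfold toFilling
  have := asc_succ_le x i
  by_cases heq : asc x (i + 1) = i
  · have := add_le_of_asc_add_eq x le_rfl (k := i) (by rw [asc_one, add_comm 1 i]; omega)
    rw [add_comm 1 i] at this
    omega
  · omega

lemma AscentSeq.toFilling_le {x : ℕ → ℕ} {m : ℕ} (hx : AscentSeq x m) {i : ℕ}
    (him : i < m) : toFilling x i ≤ i := by
  have := hx.le_asc (i := i + 1) (by omega) him
  unfold toFilling
  omega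

lemma lt_of_toFilling_le (x : ℕ → ℕ) {i j : ℕ} (hij : i < j)
    (h : toFilling x j ≤ toFilling x i) : x (j + 1) < x (i + 1) := by
  obtain ⟨k, rfl⟩ := Nat.exists_eq_add_of_lt hij
  unfold toFilling at h
  have := asc_succ_le x i
  have := asc_add_le x (m := i + 1) (by omega) (k + 1)
  rw [show i + k + 1 + 1 = i + 1 + (k + 1) by omega] at h ⊢
  by_cases heq : asc x (i + 1 + (k + 1)) = asc x (i + 1) + (k + 1)
  · have := add_le_of_asc_add_eq x (by omega) heq
    omega
  · omega

theorem stmt1_general (n : ℕ) (x : ℕ → ℕ)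
    (hasc : AscentSeq x (n + 1)) (hav : Avoids210 x (n + 1))
    (a : ℕ → ℕ) (ha : ∀ i, 1 ≤ i → i ≤ n → a i = i + x (i + 1) - asc x (i + 1)) :
    NDelta a n := by
  have ha' : ∀ i, 1 ≤ i → i ≤ n → a i = toFilling x i := ha
  refine ⟨fun i hi hin => ?_, ?_⟩
  · rw [ha' i hi hin]
    exact ⟨one_le_toFilling x hi, hasc.toFilling_le (by omega)⟩
  · rintro ⟨i, j, k, hi, hij, hjk, hkn, hji, hkj⟩
    rw [ha' i hi (by omega), ha' j (by omega) (by omega)] at hji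
    rw [ha' j (by omega) (by omega), ha' k (by omega) hkn] at hkj
    exact hav ⟨i + 1, j + 1, k + 1, by omega, by omega, by omega, by omega,
      lt_of_toFilling_le x hij hji, lt_of_toFilling_le x hjk hkj⟩

/-- Theorem 3.2: the map `φ` is well defined, i.e. `(a 1, …, a n) ∈ N(Δ_n)`. -/
theorem stmt1 (n : ℕ) (hn : 1 ≤ n) (x : ℕ → ℕ)
    (hasc : AscentSeq x (n + 1)) (hav : Avoids210 x (n + 1)) (hprim : Primitive x (n + 1))
    (a : ℕ → ℕ) (ha : ∀ i, 1 ≤ i → i ≤ n → a i = i + x (i + 1) - asc x (i + 1)) :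
    NDelta a n :=
  stmt1_general n x hasc hav a ha
end

section
/- Let n ≥ 1, let (a_1, …, a_n) ∈ N(Δ_n), and let x_1, …, x_{n+1} be the sequence produced from (a_1, …, a_n) by the recursive rule. Then for every 2 ≤ i ≤ n: if a_{i-1} ≥ a_i then x_i > x_{i+1}, and if a_{i-1} < a_i then x_i < x_{i+1}. -/
/-- `ascZ x m` is the number of ascents in the integer sequence `x 1, …, x m`. -/
def ascZ (x : ℕ → ℤ) (m : ℕ) : ℕ :=
  ((Finset.Ico 1 m).filter (fun i => x i < x (i + 1))).card

/-- `x 1, …, x (n+1)` is the (integer-valued) sequence produced from `(a 1, …, a n)`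
by the recursive rule: `x 1 = 0`, `x 2 = 1`, and for `2 ≤ i ≤ n`,
`x (i+1) = asc(x 1 … x i) + 1 + a i - i` if `a (i-1) < a i`, and
`x (i+1) = asc(x 1 … x i) + a i - i` if `a (i-1) ≥ a i`. -/
def RecRule (a : ℕ → ℕ) (n : ℕ) (x : ℕ → ℤ) : Prop :=
  x 1 = 0 ∧ x 2 = 1 ∧ ∀ i, 2 ≤ i → i ≤ n →
    x (i + 1) = if a (i - 1) < a i
      then (ascZ x i : ℤ) + 1 + (a i : ℤ) - (i : ℤ)
      else (ascZ x i : ℤ) + (a i : ℤ) - (i : ℤ)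

/-!
The recursion gives `x (i+1) - x i = [a (i-1) < a i] + a i - a (i-1) - 1` plus the correction
`[x (i-1) < x i] - [a (i-2) < a (i-1)]` coming from the ascent count. Inductively, the sign of each
step of `x` matches the comparison of the corresponding consecutive `a`'s, so the correction
vanishes (for `i = 2` one uses `a 1 = 1` instead). Hence `x (i+1) - x i` is `a i - a (i-1)` at an
ascent of `a` and `a i - a (i-1) - 1` otherwise.
-/

/-- The value of `x (i+1) - x i` forced by the recursion when `a (i-1) = p` and `a i = q`. -/
def jump (p q : ℕ) : ℤ :=
  if p < q then (q : ℤ) - p else (q : ℤ) - p - 1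

lemma jump_pos_iff {p q : ℕ} : 0 < jump p q ↔ p < q := by
  unfold jump
  split_ifs <;> omega

lemma jump_neg_of_le {p q : ℕ} (h : q ≤ p) : jump p q < 0 := by
  unfold jump
  split_ifs <;> omega

lemma ascZ_succ (x : ℕ → ℤ) {i : ℕ} (hi : 1 ≤ i) :
    ascZ x (i + 1) = ascZ x i + (if x i < x (i + 1) then 1 else 0) := by
  unfold ascZ
  rw [Nat.Ico_succ_right_eq_insert_Ico hi, Finset.filter_insert]
  split
  · rw [Finset.card_insert_of_notMem (by simp)]
  · simp

namespace RecRule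

variable {a : ℕ → ℕ} {n : ℕ} {x : ℕ → ℤ}

lemma succ_eq (hx : RecRule a n x) {i : ℕ} (hi : 2 ≤ i) (hin : i ≤ n) :
    x (i + 1) = ascZ x i + (if a (i - 1) < a i then 1 else 0) + a i - i := by
  rw [hx.2.2 i hi hin]
  split_ifs <;> ring

lemma ascZ_two (hx : RecRule a n x) : ascZ x 2 = 1 := by
  have h01 : x 1 < x (1 + 1) := by rw [hx.1, hx.2.1]; norm_num
  rw [ascZ_succ x le_rfl, if_pos h01]
  simp [ascZ]

lemma sub_eq_jump (hx : RecRule a n x) (ha1 : a 1 = 1) :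
    ∀ i, 2 ≤ i → i ≤ n → x (i + 1) - x i = jump (a (i - 1)) (a i) := by
  intro i hi
  induction i, hi using Nat.le_induction with
  | base =>
    intro h2n
    have hx3 := hx.succ_eq le_rfl h2n
    rw [hx.ascZ_two] at hx3
    rw [hx3, hx.2.1, show (2 - 1 : ℕ) = 1 from rfl, ha1, jump]
    split_ifs <;> push_cast <;> ring
  | succ i hi ih =>
    intro hin
    have hprev := ih (by omega)
    have hstep : x i < x (i + 1) ↔ a (i - 1) < a i := by
      rw [← sub_pos, hprev, jump_pos_iff]
    have hx_succ := hx.succ_eq hi (by omega)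
    have hx_succ_succ := hx.succ_eq (i := i + 1) (by omega) hin
    rw [ascZ_succ x (by omega), if_congr hstep rfl rfl, Nat.add_sub_cancel] at hx_succ_succ
    rw [hx_succ_succ, hx_succ, Nat.add_sub_cancel, jump]
    split_ifs <;> push_cast <;> ring

end RecRule

/-- Lemma 3.3 (second part): for `(a 1, …, a n) ∈ N(Δ_n)` and `2 ≤ i ≤ n`, we have
`x i > x (i+1)` if `a (i-1) ≥ a i`, and `x i < x (i+1)` if `a (i-1) < a i`. -/
theorem stmt3 (n : ℕ) (hn : 1 ≤ n) (a : ℕ → ℕ) (hA : NDelta a n)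
    (x : ℕ → ℤ) (hx : RecRule a n x) :
    ∀ i, 2 ≤ i → i ≤ n →
      (a i ≤ a (i - 1) → x (i + 1) < x i) ∧ (a (i - 1) < a i → x i < x (i + 1)) := by
  have ha1 : a 1 = 1 := le_antisymm (hA.1 1 le_rfl hn).2 (hA.1 1 le_rfl hn).1
  intro i hi hin
  have hdiff := hx.sub_eq_jump ha1 i hi hin
  refine ⟨fun hle => ?_, fun hlt => ?_⟩
  · linarith [jump_neg_of_le hle]
  · linarith [jump_pos_iff.mpr hlt]
end

section
/- Let ρ, μ, υ be partitions such that μ is equal to ρ or obtained from ρ by adding a square, and υ is equal to ρ or obtained from ρ by adding a square, let m ∈ {0, 1}, and let λ be the output of the forward local rule applied to (ρ, μ, υ, m). Then: (d) if m = 0 and ρ = μ, then λ = υ; (e) if m = 1 and ρ = μ, then λ is obtained from υ by adding a square; (f) if m = 0 and μ is obtained from ρ by adding a square, then λ is obtained from υ by adding a square. -/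
/-- A partition, viewed as a weakly decreasing, eventually-zero sequence
`f 0 ≥ f 1 ≥ …` (with `f i` the `(i+1)`-st part `λ_{i+1}`). -/
def IsPartFn (f : ℕ → ℕ) : Prop :=
  (∀ i j, i ≤ j → f j ≤ f i) ∧ ∃ N, ∀ i, N ≤ i → f i = 0

/-- `lam` is obtained from `μ` by adding a square: one part grows by 1, the rest agree. -/
def AddSq (μ lam : ℕ → ℕ) : Prop :=
  ∃ j, lam j = μ j + 1 ∧ ∀ i, i ≠ j → lam i = μ i

/-- The carries `a_1, a_2, …` of the forward local rule (0-indexed: `fcarry … i = a_{i+1}`):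
`a_1 = m` and `a_{i+1} = min (μ_i + a_i) υ_i - ρ_i`. -/
def fcarry (ρ μ υ : ℕ → ℕ) (m : ℕ) : ℕ → ℕ
  | 0 => m
  | i + 1 => min (μ i + fcarry ρ μ υ m i) (υ i) - ρ i

/-- The output `λ` of the forward local rule applied to `(ρ, μ, υ, m)`:
`λ_i = max (μ_i + a_i) υ_i` (0-indexed). -/
def frule (ρ μ υ : ℕ → ℕ) (m : ℕ) (i : ℕ) : ℕ :=
  max (μ i + fcarry ρ μ υ m i) (υ i)

/-!
The forward rule either absorbs or carries an excess unit. Where `μ_i + a_i = ρ_i ≤ υ_i`,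
it outputs `λ_i = υ_i` and carries nothing. Where `μ_i + a_i = ρ_i + 1`, the unit is
absorbed into `λ_i = υ_i + 1` when `υ_i = ρ_i`. When `υ` added its square in row `i`, the
unit is instead carried to row `i + 1`, where `υ` agrees with `ρ`, and is absorbed there.
In (d) no unit ever enters. In (e) it enters through `a_1 = m = 1`, and in (f) through the
row where `μ` has its extra square.
-/

lemma AddSq.le {μ lam : ℕ → ℕ} (h : AddSq μ lam) (i : ℕ) : μ i ≤ lam i := by
  obtain ⟨j, hj, hne⟩ := h
  by_cases hij : i = j
  · subst hij; omega
  · rw [hne i hij]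

lemma le_of_eq_or_addSq {ρ υ : ℕ → ℕ} (h : υ = ρ ∨ AddSq ρ υ) (i : ℕ) : ρ i ≤ υ i :=
  h.elim (fun h => h ▸ le_rfl) (AddSq.le · i)

section ForwardRule

variable {ρ μ υ : ℕ → ℕ} {m : ℕ}

lemma fcarry_succ (i : ℕ) :
    fcarry ρ μ υ m (i + 1) = min (μ i + fcarry ρ μ υ m i) (υ i) - ρ i := rfl

lemma frule_eq_of_fcarry_eq_zero {i : ℕ} (ha : fcarry ρ μ υ m i = 0) (hμ : μ i = ρ i)
    (hle : ρ i ≤ υ i) : frule ρ μ υ m i = υ i := by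
  rw [frule, ha, hμ, Nat.add_zero, max_eq_right hle]

lemma fcarry_succ_eq_zero {i : ℕ} (ha : fcarry ρ μ υ m i = 0) (hμ : μ i = ρ i)
    (hle : ρ i ≤ υ i) : fcarry ρ μ υ m (i + 1) = 0 := by
  rw [fcarry_succ, ha, hμ, Nat.add_zero, min_eq_left hle, Nat.sub_self]

lemma fcarry_eq_zero_of_forall_Ico {n N : ℕ} (hμ : ∀ i, n ≤ i → i < N → μ i = ρ i)
    (hle : ∀ i, ρ i ≤ υ i) (hn : fcarry ρ μ υ m n = 0) :
    ∀ i, n ≤ i → i ≤ N → fcarry ρ μ υ m i = 0 := by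
  intro i hni hiN
  induction i, hni using Nat.le_induction with
  | base => exact hn
  | succ i hni ih => exact fcarry_succ_eq_zero (ih (by omega)) (hμ i hni (by omega)) (hle i)

lemma frule_eq_of_forall_ge {n : ℕ} (hμ : ∀ i, n ≤ i → μ i = ρ i) (hle : ∀ i, ρ i ≤ υ i)
    (hn : fcarry ρ μ υ m n = 0) (i : ℕ) (hi : n ≤ i) : frule ρ μ υ m i = υ i :=
  frule_eq_of_fcarry_eq_zero
    (fcarry_eq_zero_of_forall_Ico (fun j hj _ => hμ j hj) hle hn i hi le_rfl) (hμ i hi) (hle i)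

lemma addSq_frule_of_excess_of_eq (k : ℕ) (hlow : ∀ i < k, frule ρ μ υ m i = υ i)
    (hk : μ k + fcarry ρ μ υ m k = ρ k + 1) (hυk : υ k = ρ k)
    (hhigh : ∀ i, k < i → μ i = ρ i) (hle : ∀ i, ρ i ≤ υ i) :
    AddSq υ (frule ρ μ υ m) := by
  have hcarry : fcarry ρ μ υ m (k + 1) = 0 := by
    rw [fcarry_succ, hk, hυk, min_eq_right (Nat.le_succ _), Nat.sub_self]
  refine ⟨k, by rw [frule, hk, hυk, max_eq_left (Nat.le_succ _)], fun i hik => ?_⟩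
  rcases lt_or_gt_of_ne hik with hi | hi
  · exact hlow i hi
  · exact frule_eq_of_forall_ge hhigh hle hcarry i hi

lemma addSq_frule_of_excess (k : ℕ) (hlow : ∀ i < k, frule ρ μ υ m i = υ i)
    (hk : μ k + fcarry ρ μ υ m k = ρ k + 1) (hhigh : ∀ i, k < i → μ i = ρ i)
    (hρυ : υ = ρ ∨ AddSq ρ υ) : AddSq υ (frule ρ μ υ m) := by
  have hle := le_of_eq_or_addSq hρυ
  rcases hρυ with rfl | ⟨j, hj, hne⟩
  · exact addSq_frule_of_excess_of_eq k hlow hk rfl hhigh hle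
  by_cases hjk : k = j
  · subst hjk
    have hfrule_k : frule ρ μ υ m k = υ k := by rw [frule, hk, hj, max_self]
    have hcarry : fcarry ρ μ υ m (k + 1) = 1 := by
      rw [fcarry_succ, hk, hj, min_self]; omega
    refine addSq_frule_of_excess_of_eq (k + 1) (fun i hi => ?_) ?_ (hne _ (by omega))
      (fun i hi => hhigh i (by omega)) hle
    · rcases Nat.lt_succ_iff_lt_or_eq.mp hi with hi | rfl
      exacts [hlow i hi, hfrule_k]
    · rw [hcarry, hhigh _ (Nat.lt_succ_self k)]
  · exact addSq_frule_of_excess_of_eq k hlow hk (hne k hjk) hhigh hle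

end ForwardRule

theorem stmt10_general (ρ μ υ : ℕ → ℕ)
    (hρυ : υ = ρ ∨ AddSq ρ υ) (m : ℕ) :
    (m = 0 → μ = ρ → frule ρ μ υ m = υ) ∧
    (m = 1 → μ = ρ → AddSq υ (frule ρ μ υ m)) ∧
    (m = 0 → AddSq ρ μ → AddSq υ (frule ρ μ υ m)) := by
  have hle := le_of_eq_or_addSq hρυ
  refine ⟨?_, ?_, ?_⟩
  · rintro rfl rfl
    funext i
    exact frule_eq_of_forall_ge (fun _ _ => rfl) hle rfl i (Nat.zero_le i)
  · rintro rfl rfl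
    exact addSq_frule_of_excess 0 (fun _ h => absurd h (Nat.not_lt_zero _)) rfl
      (fun _ _ => rfl) hρυ
  · rintro rfl ⟨k, hk, hne⟩
    have hprefix : ∀ i ≤ k, fcarry ρ μ υ 0 i = 0 :=
      fun i hi => fcarry_eq_zero_of_forall_Ico (fun j _ hj => hne j hj.ne) hle rfl i
        (Nat.zero_le i) hi
    refine addSq_frule_of_excess k
      (fun i hi => frule_eq_of_fcarry_eq_zero (hprefix i hi.le) (hne i hi.ne) (hle i))
      (by rw [hprefix k le_rfl, hk]) (fun i hi => hne i hi.ne') hρυ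

/-- Properties (d), (e), (f) in the proof of Lemma 2.3: with `μ` and `υ` each equal to `ρ`
or obtained from `ρ` by adding a square, and `m ∈ {0,1}`, the output `λ` of the forward
local rule satisfies:
(d) if `m = 0` and `ρ = μ` then `λ = υ`;
(e) if `m = 1` and `ρ = μ` then `λ` is obtained from `υ` by adding a square;
(f) if `m = 0` and `μ` is obtained from `ρ` by adding a square, then `λ` is obtained from
`υ` by adding a square. -/
theorem stmt10 (ρ μ υ : ℕ → ℕ) (hρ : IsPartFn ρ) (hμ : IsPartFn μ) (hυ : IsPartFn υ)
    (hρμ : μ = ρ ∨ AddSq ρ μ) (hρυ : υ = ρ ∨ AddSq ρ υ) (m : ℕ) (hm : m ≤ 1) :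
    (m = 0 → μ = ρ → frule ρ μ υ m = υ) ∧
    (m = 1 → μ = ρ → AddSq υ (frule ρ μ υ m)) ∧
    (m = 0 → AddSq ρ μ → AddSq υ (frule ρ μ υ m)) :=
  stmt10_general ρ μ υ hρυ m
end

section
/- For every n ≥ 0, the number of 01-fillings of the staircase shape Δ_n with at most one 1 per row and per column equals the number of sequences (λ^0, λ^1, …, λ^{2n}) of partitions with λ^0 = λ^{2n} = ∅ such that for each i, λ^{2i+1} is equal to λ^{2i} or obtained from it by adding a square, and λ^{2i+2} is equal to λ^{2i+1} or obtained from it by deleting a square. -/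
/-- A 01-filling of the staircase shape `Δ_n` with at most one 1 per row and per column:
a set `S` of cells `(r, c)` with `1 ≤ c ≤ r ≤ n`, no two sharing a row and no two sharing
a column. -/
def IsFilling (n : ℕ) (S : Finset (ℕ × ℕ)) : Prop :=
  (∀ p ∈ S, 1 ≤ p.2 ∧ p.2 ≤ p.1 ∧ p.1 ≤ n) ∧
  (∀ p ∈ S, ∀ q ∈ S, p.1 = q.1 → p = q) ∧
  (∀ p ∈ S, ∀ q ∈ S, p.2 = q.2 → p = q)

/-- `S` contains an NE-chain of length `k`: cells `(r_1, c_1), …, (r_k, c_k) ∈ S` with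
`r_1 > r_2 > … > r_k` and `c_1 ≤ c_2 ≤ … ≤ c_k`. -/
def NEChain (S : Finset (ℕ × ℕ)) (k : ℕ) : Prop :=
  ∃ f : Fin k → ℕ × ℕ, (∀ t, f t ∈ S) ∧
    (∀ s t : Fin k, s < t → (f t).1 < (f s).1) ∧
    (∀ s t : Fin k, s < t → (f s).2 ≤ (f t).2)

/-- A partition: a weakly decreasing, eventually-zero sequence of nonnegative integers
(`parts i` is the `(i+1)`-st part `λ_{i+1}`). -/
structure Partn where
  parts : ℕ → ℕ
  antitone : ∀ i j, i ≤ j → parts j ≤ parts i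
  eventually_zero : ∃ N, ∀ i, N ≤ i → parts i = 0

/-- The empty partition `∅`. -/
def Partn.empty : Partn :=
  ⟨fun _ => 0, fun _ _ _ => le_rfl, ⟨0, fun _ _ => rfl⟩⟩

/-- `lam` is obtained from `μ` by adding a square (equivalently, `μ` is obtained from
`lam` by deleting a square): one part grows by 1 and all other parts agree. -/
def AddSqP (μ lam : Partn) : Prop :=
  ∃ j, lam.parts j = μ.parts j + 1 ∧ ∀ i, i ≠ j → lam.parts i = μ.parts i

/-
Let `U` and `D` be the up and down operators of Young's lattice on formal sums of partitions.
Young's lattice is a differential poset, `D U = U D + 1`, hence `A = 1 + U` and `B = 1 + D` satisfy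
`B A = A B + 1`, and since `B ∅ = ∅` this gives `B A^(k+1) ∅ = A^(k+1) ∅ + (k + 1) A^k ∅`.
The sequences of the theorem ending in `ν` are counted by the coefficient of `ν` in `(B A)^n ∅`.
Removing the last row of a filling of `Δ_(n+1)` leaves a filling `S` of `Δ_n`, and the last row is
empty or uses one of the `n + 1 - |S|` free columns; comparing recursions,
`(B A)^n ∅ = ∑_S A^(n - |S|) ∅` over the fillings `S` of `Δ_n`. Every `A^k ∅` has coefficient `1`
at `∅`, so the coefficient of `∅` in `(B A)^n ∅` is the number of fillings.
-/

noncomputable section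

open Finset
open scoped Classical

theorem mul_pow_succ_eq_of_mul_eq_mul_add_one {R : Type*} [Semiring R] {a b : R}
    (h : b * a = a * b + 1) (k : ℕ) :
    b * a ^ (k + 1) = a ^ (k + 1) * b + (k + 1) • a ^ k := by
  induction k with
  | zero => simp [h]
  | succ k ih =>
    calc b * a ^ (k + 1 + 1) = b * a ^ (k + 1) * a := by rw [pow_succ _ (k + 1), mul_assoc]
      _ = a ^ (k + 1) * (b * a) + (k + 1) • a ^ (k + 1) := by
        rw [ih, add_mul, smul_mul_assoc, mul_assoc, ← pow_succ]
      _ = a ^ (k + 1 + 1) * b + (k + 1 + 1) • a ^ (k + 1) := by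
        rw [h, mul_add, mul_one, ← mul_assoc, ← pow_succ, succ_nsmul _ (k + 1), add_assoc,
          add_comm (a ^ (k + 1))]

section Walks

variable {α : Type*} (a : α) (pred : ℕ → α → Finset α)

def walks (m : ℕ) (b : α) : Set (ℕ → α) :=
  {f | f 0 = a ∧ (∀ i, m ≤ i → f i = b) ∧ ∀ i < m, f i ∈ pred i (f (i + 1))}

def walkCount : ℕ → α → ℕ
  | 0 => Pi.single a 1
  | m + 1 => fun b => ∑ c ∈ pred m b, walkCount m c

variable {a pred}

theorem walks_zero (b : α) : walks a pred 0 b = if b = a then {fun _ => a} else ∅ := by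
  ext f
  split_ifs with hb
  · subst hb
    simp only [walks, Set.mem_ofPred_eq, zero_le, forall_const, not_lt_zero, IsEmpty.forall_iff,
      and_true, Set.mem_singleton_iff]
    exact ⟨fun h => funext h.2, fun h => by subst h; exact ⟨rfl, fun _ => rfl⟩⟩
  · simp only [walks, Set.mem_ofPred_eq, Set.mem_empty_iff_false, iff_false]
    exact fun h => hb (h.2.1 0 le_rfl ▸ h.1)

theorem walks_succ (m : ℕ) (b : α) :
    walks a pred (m + 1) b =
      ⋃ c ∈ (pred m b : Set α), (fun g i => if i ≤ m then g i else b) '' walks a pred m c := by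
  ext f
  simp only [Set.mem_iUnion, Set.mem_image, mem_coe, exists_prop]
  constructor
  · rintro ⟨hf0, hfb, hstep⟩
    refine ⟨f m, hfb (m + 1) le_rfl ▸ hstep m m.lt_succ_self,
      fun i => if i ≤ m then f i else f m, ⟨by simpa using hf0, fun i hi => ?_, fun i hi => ?_⟩,
      funext fun i => ?_⟩
    · dsimp only
      split_ifs with him
      · rw [le_antisymm him hi]
      · rfl
    · simpa [hi.le, Nat.succ_le_of_lt hi] using hstep i (by omega)
    · dsimp only
      split_ifs with him
      · rfl
      · exact (hfb i (by omega)).symm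
  · rintro ⟨c, hc, g, ⟨hg0, hgc, hstep⟩, rfl⟩
    refine ⟨by simpa using hg0, fun i hi => by simp [show ¬i ≤ m by omega], fun i hi => ?_⟩
    rcases Nat.lt_succ_iff_lt_or_eq.1 hi with hi | rfl
    · simpa [hi.le, Nat.succ_le_of_lt hi] using hstep i hi
    · simpa [hgc i le_rfl] using hc

theorem encard_walks (m : ℕ) (b : α) : (walks a pred m b).encard = walkCount a pred m b := by
  induction m generalizing b with
  | zero =>
    rw [walks_zero]
    split_ifs with hb <;> simp [walkCount, hb]
  | succ m ih =>
    set extend : (ℕ → α) → ℕ → α := fun g i => if i ≤ m then g i else b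
    have hinj (c : α) : Set.InjOn extend (walks a pred m c) := fun g hg g' hg' h =>
      funext fun i => if hi : i ≤ m then by simpa [extend, hi] using congrFun h i
        else by rw [hg.2.1 i (by omega), hg'.2.1 i (by omega)]
    have hdisj : (pred m b : Set α).PairwiseDisjoint fun c => extend '' walks a pred m c := by
      intro c _ c' _ hcc'
      refine Set.disjoint_left.2 ?_
      rintro _ ⟨g, hg, rfl⟩ ⟨g', hg', h⟩
      have := congrFun h m
      simp only [extend, le_rfl, if_true, hg.2.1 m le_rfl, hg'.2.1 m le_rfl] at this
      exact hcc' this.symm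
    rw [walks_succ, (pred m b).finite_toSet.encard_biUnion hdisj, finsum_mem_coe_finset]
    simp only [(hinj _).encard_image, ih, walkCount, Nat.cast_sum]

end Walks

namespace Partn

@[ext] theorem ext {μ ν : Partn} (h : μ.parts = ν.parts) : μ = ν := by
  cases μ; cases ν; cases h; rfl

def CanAdd (μ : Partn) (j : ℕ) : Prop := j = 0 ∨ μ.parts j < μ.parts (j - 1)

def CanRemove (μ : Partn) (j : ℕ) : Prop := μ.parts (j + 1) < μ.parts j

theorem eventually_zero_ite (μ : Partn) (j v : ℕ) :
    ∃ N, ∀ i, N ≤ i → (if i = j then v else μ.parts i) = 0 := by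
  obtain ⟨N, hN⟩ := μ.eventually_zero
  exact ⟨max N (j + 1), fun i hi => by rw [if_neg (by omega), hN i (by omega)]⟩

def addSquare (μ : Partn) (j : ℕ) : Partn :=
  if h : μ.CanAdd j then
    { parts := fun i => if i = j then μ.parts j + 1 else μ.parts i
      antitone := fun i i' hii' => by
        have := μ.antitone i i' hii'
        by_cases hi : i = j <;> by_cases hi' : i' = j <;> simp only [hi, hi', if_true, if_false]
        · omega
        · subst hi; omega
        · subst hi'
          have := μ.antitone i (i' - 1) (by omega)
          unfold CanAdd at h
          omega
        · omega
      eventually_zero := μ.eventually_zero_ite j _ }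
  else μ

def removeSquare (μ : Partn) (j : ℕ) : Partn :=
  if h : μ.CanRemove j then
    { parts := fun i => if i = j then μ.parts j - 1 else μ.parts i
      antitone := fun i i' hii' => by
        have := μ.antitone i i' hii'
        by_cases hi : i = j <;> by_cases hi' : i' = j <;> simp only [hi, hi', if_true, if_false]
        · omega
        · subst hi
          have := μ.antitone (i + 1) i' (by omega)
          unfold CanRemove at h
          omega
        · subst hi'; omega
        · omega
      eventually_zero := μ.eventually_zero_ite j _ }
  else μ

theorem parts_addSquare {μ : Partn} {j : ℕ} (h : μ.CanAdd j) (i : ℕ) :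
    (μ.addSquare j).parts i = if i = j then μ.parts j + 1 else μ.parts i := by
  simp [addSquare, h]

theorem parts_removeSquare {μ : Partn} {j : ℕ} (h : μ.CanRemove j) (i : ℕ) :
    (μ.removeSquare j).parts i = if i = j then μ.parts j - 1 else μ.parts i := by
  simp [removeSquare, h]

theorem addSqP_iff_addSquare {μ lam : Partn} :
    AddSqP μ lam ↔ ∃ j, μ.CanAdd j ∧ μ.addSquare j = lam := by
  constructor
  · rintro ⟨j, hj, hne⟩
    have hadd : μ.CanAdd j := by
      refine j.eq_zero_or_pos.imp id fun hpos => ?_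
      have := lam.antitone (j - 1) j (by omega)
      have := hne (j - 1) (by omega)
      omega
    refine ⟨j, hadd, Partn.ext (funext fun i => ?_)⟩
    rw [parts_addSquare hadd]
    split_ifs with hi
    · rw [hi, hj]
    · exact (hne i hi).symm
  · rintro ⟨j, hadd, rfl⟩
    exact ⟨j, by simp [parts_addSquare hadd], fun i hi => by simp [parts_addSquare hadd, hi]⟩

theorem addSqP_iff_removeSquare {ν μ : Partn} :
    AddSqP ν μ ↔ ∃ j, μ.CanRemove j ∧ μ.removeSquare j = ν := by
  constructor
  · rintro ⟨j, hj, hne⟩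
    have hrem : μ.CanRemove j := by
      have := ν.antitone j (j + 1) (by omega)
      have := hne (j + 1) (by omega)
      unfold CanRemove
      omega
    refine ⟨j, hrem, Partn.ext (funext fun i => ?_)⟩
    rw [parts_removeSquare hrem]
    split_ifs with hi
    · rw [hi, hj]; rfl
    · exact hne i hi
  · rintro ⟨j, hrem, rfl⟩
    have : μ.parts (j + 1) < μ.parts j := hrem
    exact ⟨j, by simp [parts_removeSquare hrem]; omega,
      fun i hi => by simp [parts_removeSquare hrem, hi]⟩

def bound (μ : Partn) : ℕ := Classical.choose μ.eventually_zero

theorem parts_eq_zero_of_bound_le (μ : Partn) {i : ℕ} (h : μ.bound ≤ i) : μ.parts i = 0 :=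
  Classical.choose_spec μ.eventually_zero i h

theorem CanAdd.le_bound {μ : Partn} {j : ℕ} (h : μ.CanAdd j) : j ≤ μ.bound := by
  by_contra hj
  rcases h with h | h
  · omega
  · have := μ.parts_eq_zero_of_bound_le (i := j - 1) (by omega)
    omega

theorem CanRemove.lt_bound {μ : Partn} {j : ℕ} (h : μ.CanRemove j) : j < μ.bound := by
  by_contra hj
  have := μ.parts_eq_zero_of_bound_le (i := j) (by omega)
  unfold CanRemove at h
  omega

def addableRows (μ : Partn) : Finset ℕ := (range (μ.bound + 1)).filter μ.CanAdd

def removableRows (μ : Partn) : Finset ℕ := (range μ.bound).filter μ.CanRemove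

@[simp] theorem mem_addableRows {μ : Partn} {j : ℕ} : j ∈ μ.addableRows ↔ μ.CanAdd j := by
  simpa [addableRows] using fun h => Nat.lt_succ_of_le h.le_bound

@[simp] theorem mem_removableRows {μ : Partn} {j : ℕ} : j ∈ μ.removableRows ↔ μ.CanRemove j := by
  simpa [removableRows] using CanRemove.lt_bound

def upSet (μ : Partn) : Finset Partn := μ.addableRows.image μ.addSquare

def downSet (μ : Partn) : Finset Partn := μ.removableRows.image μ.removeSquare

theorem mem_upSet {μ lam : Partn} : lam ∈ μ.upSet ↔ AddSqP μ lam := by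
  simp [upSet, addSqP_iff_addSquare]

theorem mem_downSet {μ ν : Partn} : ν ∈ μ.downSet ↔ AddSqP ν μ := by
  simp [downSet, addSqP_iff_removeSquare]

theorem addSquare_injOn (μ : Partn) : Set.InjOn μ.addSquare μ.addableRows := by
  intro i hi j hj hij
  rw [mem_coe, mem_addableRows] at hi hj
  by_contra h
  have := congrArg (fun ν => ν.parts i) hij
  simp only [parts_addSquare hi, parts_addSquare hj, if_true, if_neg h] at this
  omega

theorem removeSquare_injOn (μ : Partn) : Set.InjOn μ.removeSquare μ.removableRows := by
  intro i hi j hj hij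
  rw [mem_coe, mem_removableRows] at hi hj
  by_contra h
  have := congrArg (fun ν => ν.parts i) hij
  simp only [parts_removeSquare hi, parts_removeSquare hj, if_true, if_neg h] at this
  unfold CanRemove at hi
  omega

-- The addable rows are row `0` and the rows just below the removable ones.
theorem card_addableRows (μ : Partn) : #μ.addableRows = #μ.removableRows + 1 := by
  have : μ.addableRows = insert 0 (μ.removableRows.map (addRightEmbedding 1)) := by
    ext j
    rcases j with _ | j <;> simp [CanAdd, CanRemove]
  rw [this, card_insert_of_notMem (by simp), card_map]

section

variable {μ : Partn} {i j : ℕ}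

theorem CanAdd.canRemove_addSquare (h : μ.CanAdd i) : (μ.addSquare i).CanRemove i := by
  have := μ.antitone i (i + 1) (by omega)
  unfold CanRemove
  simp only [parts_addSquare h]
  split_ifs <;> omega

theorem CanAdd.removeSquare_addSquare (h : μ.CanAdd i) : (μ.addSquare i).removeSquare i = μ := by
  ext t
  simp only [parts_removeSquare h.canRemove_addSquare, parts_addSquare h]
  split_ifs <;> subst_vars <;> omega

theorem CanRemove.canAdd_removeSquare (h : μ.CanRemove j) : (μ.removeSquare j).CanAdd j := by
  have := μ.antitone (j - 1) j (by omega)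
  unfold CanAdd
  simp only [parts_removeSquare h]
  unfold CanRemove at h
  split_ifs <;> omega

theorem CanRemove.addSquare_removeSquare (h : μ.CanRemove j) :
    (μ.removeSquare j).addSquare j = μ := by
  have : μ.parts (j + 1) < μ.parts j := h
  ext t
  simp only [parts_addSquare h.canAdd_removeSquare, parts_removeSquare h]
  split_ifs <;> subst_vars <;> omega

theorem canAdd_and_canRemove_addSquare_iff (hij : i ≠ j) :
    μ.CanAdd i ∧ (μ.addSquare i).CanRemove j ↔ μ.CanRemove j ∧ (μ.removeSquare j).CanAdd i := by
  have := μ.antitone j (j + 1) (by omega)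
  have hshift : i = j + 1 → μ.parts i = μ.parts (j + 1) ∧ μ.parts (i - 1) = μ.parts j := by
    rintro rfl; simp
  constructor
  · rintro ⟨hadd, hrem⟩
    unfold CanRemove at hrem
    simp only [parts_addSquare hadd] at hrem
    have hrem' : μ.CanRemove j := by unfold CanRemove; split_ifs at hrem <;> omega
    refine ⟨hrem', ?_⟩
    unfold CanAdd at hadd ⊢
    simp only [parts_removeSquare hrem']
    split_ifs at hrem ⊢ <;> omega
  · rintro ⟨hrem, hadd⟩
    unfold CanAdd at hadd
    simp only [parts_removeSquare hrem] at hadd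
    have hadd' : μ.CanAdd i := by unfold CanAdd; split_ifs at hadd <;> omega
    refine ⟨hadd', ?_⟩
    unfold CanRemove at hrem ⊢
    simp only [parts_addSquare hadd']
    split_ifs at hadd ⊢ <;> omega

theorem removeSquare_addSquare_comm (hij : i ≠ j) (hi : μ.CanAdd i)
    (hj : (μ.addSquare i).CanRemove j) :
    (μ.addSquare i).removeSquare j = (μ.removeSquare j).addSquare i := by
  obtain ⟨hj', hi'⟩ := (canAdd_and_canRemove_addSquare_iff hij).1 ⟨hi, hj⟩
  ext t
  simp only [parts_removeSquare hj, parts_addSquare hi, parts_addSquare hi',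
    parts_removeSquare hj']
  split_ifs <;> omega

end

theorem sum_downSet {M : Type*} [AddCommMonoid M] (x : Partn → M) (μ : Partn) :
    ∑ ν ∈ μ.downSet, x ν = ∑ j ∈ μ.removableRows, x (μ.removeSquare j) :=
  sum_image fun _ hi _ hj => μ.removeSquare_injOn hi hj

theorem sum_upSet {M : Type*} [AddCommMonoid M] (x : Partn → M) (μ : Partn) :
    ∑ lam ∈ μ.upSet, x lam = ∑ j ∈ μ.addableRows, x (μ.addSquare j) :=
  sum_image fun _ hi _ hj => μ.addSquare_injOn hi hj

/-- Young's lattice is a differential poset: `D U = U D + 1`. The terms with equal rows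
give `x β` once per addable row and once per removable row, and there is one more
addable row; the remaining terms match up by exchanging the order of the two moves. -/
theorem sum_upSet_sum_downSet {M : Type*} [AddCommMonoid M] (x : Partn → M) (β : Partn) :
    ∑ μ ∈ β.upSet, ∑ ν ∈ μ.downSet, x ν = ∑ ν ∈ β.downSet, ∑ μ ∈ ν.upSet, x μ + x β := by
  have hL : ∀ i ∈ β.addableRows, ∑ ν ∈ (β.addSquare i).downSet, x ν =
      ∑ j ∈ (β.addSquare i).removableRows.erase i, x ((β.addSquare i).removeSquare j) + x β := by
    intro i hi
    rw [mem_addableRows] at hi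
    rw [sum_downSet, ← sum_erase_add _ _ (mem_removableRows.2 hi.canRemove_addSquare),
      hi.removeSquare_addSquare]
  have hR : ∀ j ∈ β.removableRows, ∑ μ ∈ (β.removeSquare j).upSet, x μ =
      ∑ i ∈ (β.removeSquare j).addableRows.erase j, x ((β.removeSquare j).addSquare i) + x β := by
    intro j hj
    rw [mem_removableRows] at hj
    rw [sum_upSet, ← sum_erase_add _ _ (mem_addableRows.2 hj.canAdd_removeSquare),
      hj.addSquare_removeSquare]
  have hswap : ∑ i ∈ β.addableRows, ∑ j ∈ (β.addSquare i).removableRows.erase i,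
        x ((β.addSquare i).removeSquare j) =
      ∑ j ∈ β.removableRows, ∑ i ∈ (β.removeSquare j).addableRows.erase j,
        x ((β.removeSquare j).addSquare i) := by
    refine (sum_congr rfl fun i hi => sum_congr rfl fun j hj => ?_).trans (sum_comm' ?_)
    · rw [mem_erase, mem_removableRows] at hj
      rw [removeSquare_addSquare_comm hj.1.symm (mem_addableRows.1 hi) hj.2]
    · intro i j
      simp only [mem_erase, mem_addableRows, mem_removableRows]
      have := canAdd_and_canRemove_addSquare_iff (μ := β) (i := i) (j := j)
      grind
  rw [sum_upSet, sum_downSet, sum_congr rfl hL, sum_congr rfl hR, sum_add_distrib,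
    sum_add_distrib, hswap, sum_const, sum_const, card_addableRows, succ_nsmul, add_assoc]

theorem not_addSqP_empty (μ : Partn) : ¬AddSqP μ Partn.empty := by
  rintro ⟨j, hj, -⟩
  exact absurd hj (by simp [Partn.empty])

/-- On coefficient vectors of formal sums of partitions, `up` is the up operator
`U ν = ∑_{μ ⋗ ν} μ` and `down` the down operator `D μ = ∑_{ν ⋖ μ} ν`. -/
def up : Module.End ℕ (Partn → ℕ) :=
  LinearMap.pi fun μ => ∑ ν ∈ μ.downSet, LinearMap.proj ν

def down : Module.End ℕ (Partn → ℕ) :=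
  LinearMap.pi fun β => ∑ μ ∈ β.upSet, LinearMap.proj μ

@[simp] theorem up_apply (x : Partn → ℕ) (μ : Partn) : up x μ = ∑ ν ∈ μ.downSet, x ν := by
  simp [up]

@[simp] theorem down_apply (x : Partn → ℕ) (β : Partn) : down x β = ∑ μ ∈ β.upSet, x μ := by
  simp [down]

theorem down_mul_up : down * up = up * down + 1 := by
  refine LinearMap.ext fun x => funext fun β => ?_
  simp [sum_upSet_sum_downSet]

theorem downSet_empty : Partn.empty.downSet = ∅ :=
  eq_empty_of_forall_notMem fun _ h => not_addSqP_empty _ (mem_downSet.1 h)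

theorem down_single_empty : down (Pi.single Partn.empty 1) = 0 := by
  ext β
  simp [Pi.single_apply, mem_upSet, not_addSqP_empty]

def upOrStay : Module.End ℕ (Partn → ℕ) := 1 + up

def downOrStay : Module.End ℕ (Partn → ℕ) := 1 + down

theorem upOrStay_apply (x : Partn → ℕ) (μ : Partn) :
    upOrStay x μ = ∑ ν ∈ insert μ μ.downSet, x ν := by
  rw [sum_insert fun h => (mem_downSet.1 h).elim fun j hj => by omega]
  simp [upOrStay]

theorem downOrStay_apply (x : Partn → ℕ) (β : Partn) :
    downOrStay x β = ∑ μ ∈ insert β β.upSet, x μ := by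
  rw [sum_insert fun h => (mem_upSet.1 h).elim fun j hj => by omega]
  simp [downOrStay]

theorem downOrStay_mul_upOrStay : downOrStay * upOrStay = upOrStay * downOrStay + 1 := by
  simp only [upOrStay, downOrStay, add_mul, mul_add, one_mul, mul_one, down_mul_up]
  abel

theorem upOrStay_pow_apply_empty (k : ℕ) (x : Partn → ℕ) :
    (upOrStay ^ k) x Partn.empty = x Partn.empty := by
  induction k with
  | zero => rfl
  | succ k ih => simp [pow_succ', upOrStay_apply, downSet_empty, ih]

theorem downOrStay_single_empty :
    downOrStay (Pi.single Partn.empty 1) = Pi.single Partn.empty 1 := by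
  simp [downOrStay, down_single_empty]

theorem downOrStay_mul_upOrStay_pow_single_empty (k : ℕ) :
    (downOrStay * upOrStay) ((upOrStay ^ k) (Pi.single Partn.empty 1)) =
      (upOrStay ^ (k + 1)) (Pi.single Partn.empty 1) +
        (k + 1) • (upOrStay ^ k) (Pi.single Partn.empty 1) := by
  rw [← Module.End.mul_apply, mul_assoc, ← pow_succ',
    mul_pow_succ_eq_of_mul_eq_mul_add_one downOrStay_mul_upOrStay, LinearMap.add_apply,
    Module.End.mul_apply, downOrStay_single_empty, LinearMap.smul_apply]

end Partn

def fillings (n : ℕ) : Finset (Finset (ℕ × ℕ)) :=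
  (Icc 1 n ×ˢ Icc 1 n).powerset.filter (IsFilling n)

theorem mem_fillings {n : ℕ} {S : Finset (ℕ × ℕ)} : S ∈ fillings n ↔ IsFilling n S := by
  refine mem_filter.trans (and_iff_right_of_imp fun h => mem_powerset.2 fun p hp => ?_)
  have := h.1 p hp
  simp only [mem_product, mem_Icc]
  omega

def freeCols (n : ℕ) (S : Finset (ℕ × ℕ)) : Finset ℕ := Icc 1 (n + 1) \ S.image Prod.snd

namespace IsFilling

variable {n : ℕ} {S T : Finset (ℕ × ℕ)}

theorem card_le (h : IsFilling n S) : #S ≤ n := by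
  simpa using card_le_card_of_injOn Prod.fst (t := Icc 1 n)
    (fun p hp => by have := h.1 p hp; simp only [coe_Icc, Set.mem_Icc]; omega)
    (fun p hp q hq => h.2.1 p hp q hq)

theorem card_freeCols (h : IsFilling n S) : #(freeCols n S) = n + 1 - #S := by
  have hsub : S.image Prod.snd ⊆ Icc 1 (n + 1) := by
    intro c hc
    obtain ⟨p, hp, rfl⟩ := mem_image.1 hc
    have := h.1 p hp
    simp only [mem_Icc]
    omega
  rw [freeCols, card_sdiff_of_subset hsub, Nat.card_Icc,
    card_image_of_injOn fun p hp q hq => h.2.2 p hp q hq, Nat.add_sub_cancel]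

theorem succ (h : IsFilling n S) : IsFilling (n + 1) S :=
  ⟨fun p hp => by have := h.1 p hp; omega, h.2⟩

theorem insert_succ (h : IsFilling n S) {c : ℕ} (hc : c ∈ freeCols n S) :
    IsFilling (n + 1) (insert (n + 1, c) S) := by
  simp only [freeCols, mem_sdiff, mem_Icc, mem_image, not_exists, not_and] at hc
  have hrow : ∀ p ∈ S, p.1 ≠ n + 1 := fun p hp => by have := h.1 p hp; omega
  refine ⟨fun p hp => ?_, fun p hp q hq hpq => ?_, fun p hp q hq hpq => ?_⟩ <;>
    rw [mem_insert] at hp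
  · rcases hp with rfl | hp
    · exact ⟨hc.1.1, hc.1.2, le_rfl⟩
    · have := h.1 p hp; omega
  all_goals rw [mem_insert] at hq; rcases hp with rfl | hp <;> rcases hq with rfl | hq
  · rfl
  · exact absurd hpq.symm (hrow q hq)
  · exact absurd hpq (hrow p hp)
  · exact h.2.1 p hp q hq hpq
  · rfl
  · exact absurd hpq.symm (hc.2 q hq)
  · exact absurd hpq (hc.2 p hp)
  · exact h.2.2 p hp q hq hpq

theorem restrict (h : IsFilling (n + 1) T) : IsFilling n (T.filter (·.1 ≤ n)) := by
  refine ⟨fun p hp => ?_, fun p hp q hq => h.2.1 p (mem_filter.1 hp).1 q (mem_filter.1 hq).1,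
    fun p hp q hq => h.2.2 p (mem_filter.1 hp).1 q (mem_filter.1 hq).1⟩
  rw [mem_filter] at hp
  have := h.1 p hp.1
  omega

theorem filter_fst_le (h : IsFilling n S) : S.filter (·.1 ≤ n) = S :=
  filter_true_of_mem fun p hp => (h.1 p hp).2.2

theorem eq_or_eq_insert (h : IsFilling (n + 1) T) :
    T = T.filter (·.1 ≤ n) ∨
      ∃ c ∈ freeCols n (T.filter (·.1 ≤ n)), insert (n + 1, c) (T.filter (·.1 ≤ n)) = T := by
  by_cases hlast : ∃ p ∈ T, ¬p.1 ≤ n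
  · obtain ⟨p, hp, hpn⟩ := hlast
    obtain ⟨hp1, hp2, hp3⟩ := h.1 p hp
    have hpfst : p.1 = n + 1 := by omega
    refine Or.inr ⟨p.2, ?_, ?_⟩
    · simp only [freeCols, mem_sdiff, mem_Icc, mem_image, mem_filter, not_exists, not_and]
      exact ⟨⟨hp1, by omega⟩, fun q ⟨hq, hqn⟩ hqp => by
        rw [h.2.2 q hq p hp hqp] at hqn; exact hpn hqn⟩
    · ext q
      simp only [mem_insert, mem_filter]
      refine ⟨?_, fun hq => or_iff_not_imp_right.2 fun hqn => ?_⟩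
      · rintro (rfl | ⟨hq, -⟩)
        · rwa [← hpfst]
        · exact hq
      · rw [h.2.1 q hq p hp (by have := (h.1 q hq).2.2; have := not_and.1 hqn hq; omega)]
        rw [← hpfst]
  · push Not at hlast
    exact Or.inl (filter_true_of_mem hlast).symm

theorem filter_insert_succ (h : IsFilling n S) (c : ℕ) :
    (insert (n + 1, c) S).filter (·.1 ≤ n) = S := by
  rw [filter_insert, if_neg (by simp), h.filter_fst_le]

end IsFilling

theorem filter_fillings_succ_eq {n : ℕ} {S : Finset (ℕ × ℕ)} (hS : IsFilling n S) :
    (fillings (n + 1)).filter (fun T => T.filter (·.1 ≤ n) = S) =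
      insert S ((freeCols n S).image fun c => insert (n + 1, c) S) := by
  ext T
  simp only [mem_filter, mem_fillings, mem_insert, mem_image]
  constructor
  · rintro ⟨hT, rfl⟩
    exact hT.eq_or_eq_insert
  · rintro (rfl | ⟨c, hc, rfl⟩)
    · exact ⟨hS.succ, hS.filter_fst_le⟩
    · exact ⟨hS.insert_succ hc, hS.filter_insert_succ c⟩

/-- Row `n + 1` of a filling of `Δ_(n+1)` is empty or has its `1` in one of the `n + 1 - #S`
columns not used by the remaining filling `S` of `Δ_n`. -/
theorem sum_fillings_succ {M : Type*} [AddCommMonoid M] (g : ℕ → M) (n : ℕ) :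
    ∑ T ∈ fillings (n + 1), g (n + 1 - #T) =
      ∑ S ∈ fillings n, (g (n + 1 - #S) + (n + 1 - #S) • g (n - #S)) := by
  rw [← sum_fiberwise_of_maps_to (g := fun T => T.filter (·.1 ≤ n)) (t := fillings n)
    fun T hT => mem_fillings.2 (mem_fillings.1 hT).restrict]
  refine sum_congr rfl fun S hS => ?_
  rw [mem_fillings] at hS
  have hnot : S ∉ (freeCols n S).image fun c => insert (n + 1, c) S := by
    simp only [mem_image, not_exists, not_and]
    intro c _ hcS
    have := (hS.1 _ (hcS ▸ mem_insert_self _ _)).2.2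
    omega
  have hinj : Set.InjOn (fun c => insert (n + 1, c) S) (freeCols n S) := by
    intro c _ d _ hcd
    have : (n + 1, c) ∈ insert (n + 1, d) S := by
      rw [← show insert (n + 1, c) S = insert (n + 1, d) S from hcd]
      exact mem_insert_self _ _
    rcases mem_insert.1 this with h | h
    · exact (Prod.mk.inj h).2
    · have := (hS.1 _ h).2.2; omega
  rw [filter_fillings_succ_eq hS, sum_insert hnot, sum_image hinj]
  have hcard : ∀ c ∈ freeCols n S, #(insert (n + 1, c) S) = #S + 1 := fun c _ =>
    card_insert_of_notMem fun h => by have := (hS.1 _ h).2.2; omega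
  rw [sum_congr rfl fun c hc => by rw [hcard c hc], sum_const, hS.card_freeCols,
    Nat.add_sub_add_right]

open Partn

theorem fillings_zero : fillings 0 = {∅} := by
  ext S
  simp only [mem_fillings, mem_singleton, IsFilling]
  refine ⟨fun h => eq_empty_of_forall_notMem fun p hp => ?_, fun h => by simp [h]⟩
  have := h.1 p hp
  omega

theorem downOrStay_mul_upOrStay_pow_eq_sum_fillings (n : ℕ) :
    ((downOrStay * upOrStay) ^ n) (Pi.single Partn.empty 1) =
      ∑ S ∈ fillings n, (upOrStay ^ (n - #S)) (Pi.single Partn.empty 1) := by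
  induction n with
  | zero => simp [fillings_zero]
  | succ n ih =>
    rw [pow_succ', Module.End.mul_apply, ih, map_sum,
      sum_fillings_succ fun m => (upOrStay ^ m) (Pi.single Partn.empty 1)]
    refine sum_congr rfl fun S hS => ?_
    rw [downOrStay_mul_upOrStay_pow_single_empty,
      Nat.sub_add_comm (mem_fillings.1 hS).card_le]

theorem card_fillings (n : ℕ) :
    #(fillings n) = ((downOrStay * upOrStay) ^ n) (Pi.single Partn.empty 1) Partn.empty := by
  simp [downOrStay_mul_upOrStay_pow_eq_sum_fillings, upOrStay_pow_apply_empty]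

def youngStep (i : ℕ) (μ : Partn) : Finset Partn :=
  if Even i then insert μ μ.downSet else insert μ μ.upSet

theorem mem_youngStep_two_mul {i : ℕ} {μ ν : Partn} :
    ν ∈ youngStep (2 * i) μ ↔ μ = ν ∨ AddSqP ν μ := by
  simp [youngStep, mem_downSet, eq_comm]

theorem mem_youngStep_two_mul_add_one {i : ℕ} {μ ν : Partn} :
    ν ∈ youngStep (2 * i + 1) μ ↔ μ = ν ∨ AddSqP μ ν := by
  simp [youngStep, mem_upSet, eq_comm]

theorem walkCount_youngStep (n : ℕ) :
    walkCount Partn.empty youngStep (2 * n) =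
      ((downOrStay * upOrStay) ^ n) (Pi.single Partn.empty 1) := by
  induction n with
  | zero => rfl
  | succ n ih =>
    funext β
    simp only [Nat.mul_succ, walkCount, pow_succ', Module.End.mul_apply, downOrStay_apply,
      upOrStay_apply, ← ih]
    simp [youngStep]

theorem mem_walks_youngStep_iff {n : ℕ} {f : ℕ → Partn} :
    f ∈ walks Partn.empty youngStep (2 * n) Partn.empty ↔
      (∀ i, 2 * n < i → f i = Partn.empty) ∧ f 0 = Partn.empty ∧ f (2 * n) = Partn.empty ∧
      (∀ i, 2 * i + 1 ≤ 2 * n →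
        f (2 * i + 1) = f (2 * i) ∨ AddSqP (f (2 * i)) (f (2 * i + 1))) ∧
      (∀ i, 2 * i + 2 ≤ 2 * n →
        f (2 * i + 2) = f (2 * i + 1) ∨ AddSqP (f (2 * i + 2)) (f (2 * i + 1))) := by
  have htail : (∀ i, 2 * n ≤ i → f i = Partn.empty) ↔
      (∀ i, 2 * n < i → f i = Partn.empty) ∧ f (2 * n) = Partn.empty :=
    ⟨fun h => ⟨fun i hi => h i hi.le, h _ le_rfl⟩,
      fun h i hi => hi.lt_or_eq.elim (h.1 i) fun hi => hi ▸ h.2⟩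
  have hsteps : (∀ i < 2 * n, f i ∈ youngStep i (f (i + 1))) ↔
      (∀ i, 2 * i + 1 ≤ 2 * n →
        f (2 * i + 1) = f (2 * i) ∨ AddSqP (f (2 * i)) (f (2 * i + 1))) ∧
      (∀ i, 2 * i + 2 ≤ 2 * n →
        f (2 * i + 2) = f (2 * i + 1) ∨ AddSqP (f (2 * i + 2)) (f (2 * i + 1))) := by
    refine ⟨fun h => ⟨fun i hi => mem_youngStep_two_mul.1 (h (2 * i) (by omega)),
      fun i hi => mem_youngStep_two_mul_add_one.1 (h (2 * i + 1) (by omega))⟩, ?_⟩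
    rintro ⟨heven, hodd⟩ i hi
    obtain ⟨k, rfl | rfl⟩ := Nat.even_or_odd' i
    · exact mem_youngStep_two_mul.2 (heven k (by omega))
    · exact mem_youngStep_two_mul_add_one.2 (hodd k (by omega))
  simp only [walks, Set.mem_ofPred_eq, htail, hsteps]
  tauto

/-- Theorem 2.5: for every `n ≥ 0`, 01-fillings of `Δ_n` with at most one 1 per row and
per column are equinumerous with sequences `(λ^0, …, λ^{2n})` of partitions with
`λ^0 = λ^{2n} = ∅` where each `λ^{2i+1}` equals `λ^{2i}` or is obtained from it by adding
a square, and each `λ^{2i+2}` equals `λ^{2i+1}` or is obtained from it by deleting a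
square. -/
theorem stmt17 (n : ℕ) :
    {S : Finset (ℕ × ℕ) | IsFilling n S}.ncard =
    {f : ℕ → Partn | (∀ i, 2 * n < i → f i = Partn.empty) ∧
      f 0 = Partn.empty ∧ f (2 * n) = Partn.empty ∧
      (∀ i, 2 * i + 1 ≤ 2 * n →
        f (2 * i + 1) = f (2 * i) ∨ AddSqP (f (2 * i)) (f (2 * i + 1))) ∧
      (∀ i, 2 * i + 2 ≤ 2 * n →
        f (2 * i + 2) = f (2 * i + 1) ∨ AddSqP (f (2 * i + 2)) (f (2 * i + 1)))}.ncard := by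
  have hfill : {S : Finset (ℕ × ℕ) | IsFilling n S} = fillings n := by
    ext S
    simp [mem_fillings]
  rw [hfill, Set.ncard_coe_finset, card_fillings, ← walkCount_youngStep,
    ← ENat.toNat_natCast (walkCount _ _ _ _), ← encard_walks, ← Set.ncard_def]
  congr 1
  ext f
  exact mem_walks_youngStep_iff
end
end
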